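/- Let a and b be finite Boolean lists. If StBr(a) <_Q StBr(b) and |StBr(b)| < |StBr(a)| + |R(a)|, then R(a) ≤_Q StBr(b). -/
import Mathlib


/-- One step of the Stern–Brocot state-passing recursion: the state is the pair
`(L, R)` of bounds; a `false` step (left child) replaces `R` by `L + R`, a `true`
step (right child) replaces `L` by `L + R`. -/
def sbStep : ((ℕ × ℕ) × (ℕ × ℕ)) → Bool → ((ℕ × ℕ) × (ℕ × ℕ))
  | (L, R), false => (L, (L.1 + R.1, L.2 + R.2))
  | (L, R), true  => ((L.1 + R.1, L.2 + R.2), R)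

/-- The bounds `(L(w), R(w))` of the node of the Stern–Brocot tree addressed by
the path `w`, starting from `((0,1), (1,0))` at the root. -/
def sbBounds (w : List Bool) : (ℕ × ℕ) × (ℕ × ℕ) :=
  w.foldl sbStep ((0, 1), (1, 0))

/-- The left godfather pair `L(w)`. -/
def sbL (w : List Bool) : ℕ × ℕ := (sbBounds w).1

/-- The right godfather pair `R(w)`. -/
def sbR (w : List Bool) : ℕ × ℕ := (sbBounds w).2

/-- The Stern–Brocot pair `StBr(w) = L(w) + R(w)` (componentwise sum). -/
def stBr (w : List Bool) : ℕ × ℕ :=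
  ((sbL w).1 + (sbR w).1, (sbL w).2 + (sbR w).2)

/-- The order `<_Q` on pairs of nonnegative integers:
`(r,s) <_Q (r',s')` iff `r·s' < r'·s`. -/
def ltQ (p q : ℕ × ℕ) : Prop := p.1 * q.2 < q.1 * p.2

/-- The order `≤_Q` on pairs of nonnegative integers:
`(r,s) ≤_Q (r',s')` iff `r·s' ≤ r'·s`. -/
def leQ (p q : ℕ × ℕ) : Prop := p.1 * q.2 ≤ q.1 * p.2

/-- The weight `|(r,s)| := r + s` of a pair. -/
def wtQ (p : ℕ × ℕ) : ℕ := p.1 + p.2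


lemma sb_det_aux (w : List Bool) : ∀ st : (ℕ × ℕ) × (ℕ × ℕ),
    st.2.1 * st.1.2 = st.1.1 * st.2.2 + 1 →
    (w.foldl sbStep st).2.1 * (w.foldl sbStep st).1.2
      = (w.foldl sbStep st).1.1 * (w.foldl sbStep st).2.2 + 1 := by
  induction w with
  | nil => intro st h; exact h
  | cons c w ih =>
    intro st h
    cases c <;> · apply ih; simp only [sbStep]; nlinarith [h]

lemma sb_det (w : List Bool) :
    (sbR w).1 * (sbL w).2 = (sbL w).1 * (sbR w).2 + 1 := by
  have := sb_det_aux w ((0,1),(1,0)) (by norm_num)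
  simpa [sbR, sbL, sbBounds] using this

/-- If `StBr(a) <_Q StBr(b)` and `|StBr(b)| < |StBr(a)| + |R(a)|` then
`R(a) ≤_Q StBr(b)`. -/
theorem sternBrocot_right_godfather_le (a b : List Bool)
    (h1 : ltQ (stBr a) (stBr b))
    (h2 : wtQ (stBr b) < wtQ (stBr a) + wtQ (sbR a)) :
    leQ (sbR a) (stBr b) := by
  have hdet := sb_det a
  set p := (sbL a).1
  set q := (sbL a).2
  set r := (sbR a).1
  set s := (sbR a).2
  set x := (stBr b).1
  set y := (stBr b).2
  have hx : (stBr a).1 = p + r := rfl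
  have hy : (stBr a).2 = q + s := rfl
  simp only [ltQ, leQ, wtQ, hx, hy] at h1 h2 ⊢
  by_contra h
  push_neg at h
  nlinarith [h1, h2, h, hdet]
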